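/- Let f ∈ C¹(𝕊¹) and g ∈ C⁰(𝕊¹), and let H denote the periodic Hilbert transform (Hg)(s) = (1/2π) p.v. ∫_{𝕊¹} cot((s-s')/2) g(s') ds'. Then the commutator [H,f]g = H(fg) − f·H(g) satisfies ‖[H,f]g‖_{C^{0,α}} ≤ C ‖f‖_{C¹} ‖g‖_{C⁰} for every α ∈ (0,1), where C depends only on α. -/

import Mathlib

/-!
The commutator is the absolutely convergent integral of the kernel
`K(s, s') = cot((s - s')/2) (f(s') - f(s)) g(s')`. Since `|cot(x/2)| ≤ π/|x|` on `[-π, π]` and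
`f` is `‖f‖_{C¹}`-Lipschitz, `K` is bounded by `π ‖f‖_{C¹} ‖g‖_{C⁰}`, which gives the `C⁰` bound.
For the Hölder seminorm, put `h = |s₁ - s₂|` and integrate `K(s₁, ·) - K(s₂, ·)` over the period
centred at `s₁`. Near `s₁` (within `2h`) both kernels are bounded, contributing `O(h)`; away from
`s₁` the difference of the cotangents gives `|K(s₁, s') - K(s₂, s')| = O(h / |s₁ - s'|)`,
contributing `O(h log(1/h))`. Finally `h log(1/h) ≤ h^α / (1 - α)` up to a constant.
-/

open Real

noncomputable section

/-- The `C⁰` norm on `𝕊¹ = ℝ/2πℤ` (for `2π`-periodic functions). -/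
noncomputable def C0norm (u : ℝ → ℝ) : ℝ := ⨆ s : ℝ, |u s|

/-- The `C¹` norm. -/
noncomputable def C1norm (u : ℝ → ℝ) : ℝ := ⨆ s : ℝ, (|u s| + |deriv u s|)

/-- The Hölder norm `‖u‖_{C^{0,α}} = ‖u‖_{C⁰} + sup_{0<|s-s'|<1} |u(s)-u(s')|/|s-s'|^α`. -/
noncomputable def holderNorm (α : ℝ) (u : ℝ → ℝ) : ℝ :=
  C0norm u +
    sSup {r : ℝ | ∃ s s' : ℝ, s ≠ s' ∧ |s - s'| < 1 ∧ r = |u s - u s'| / |s - s'| ^ α}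

/-- The commutator `[H,f]g = H(fg) − f·H(g)` of the periodic Hilbert transform
`(Hg)(s) = (1/2π) p.v.∫ cot((s-s')/2) g(s') ds'` with multiplication by `f`; for `f ∈ C¹`
and `g ∈ C⁰` it is given by the absolutely convergent integral
`(1/2π)∫ cot((s-s')/2)(f(s')-f(s))g(s')ds'`. -/
noncomputable def commH (f g : ℝ → ℝ) (s : ℝ) : ℝ :=
  (1 / (2 * π)) * ∫ s' in (0 : ℝ)..(2 * π), Real.cot ((s - s') / 2) * ((f s' - f s) * g s')

open MeasureTheory

namespace Real

lemma cot_add_pi (x : ℝ) : cot (x + π) = cot x := by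
  rw [cot_eq_cos_div_sin, cot_eq_cos_div_sin, sin_add_pi, cos_add_pi, neg_div_neg_eq]

lemma measurable_cot : Measurable cot := by
  rw [show cot = fun x => cos x / sin x from funext cot_eq_cos_div_sin]
  fun_prop

lemma cot_sub_cot {a b : ℝ} (ha : sin a ≠ 0) (hb : sin b ≠ 0) :
    cot a - cot b = sin (b - a) / (sin a * sin b) := by
  rw [cot_eq_cos_div_sin, cot_eq_cos_div_sin, sin_sub]
  field_simp

lemma abs_cot_le_inv_abs_sin (x : ℝ) : |cot x| ≤ |sin x|⁻¹ := by
  rw [cot_eq_cos_div_sin, abs_div, div_eq_mul_inv]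
  exact mul_le_of_le_one_left (by positivity) (abs_cos_le_one x)

lemma abs_div_pi_le_abs_sin_half {x : ℝ} (hx : |x| ≤ π) : |x| / π ≤ |sin (x / 2)| := by
  have hx2 : |x / 2| ≤ π / 2 := by rw [abs_div, abs_two]; linarith
  calc |x| / π = 2 / π * |x / 2| := by rw [abs_div, abs_two]; field_simp
    _ ≤ |sin (x / 2)| := mul_abs_le_abs_sin hx2

lemma abs_cot_half_mul_abs_le {x : ℝ} (hx : |x| ≤ π) : |cot (x / 2)| * |x| ≤ π := by
  rcases eq_or_ne x 0 with rfl | hx0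
  · simp [pi_pos.le]
  have hpos : 0 < |x| / π := by positivity
  calc |cot (x / 2)| * |x| ≤ (|x| / π)⁻¹ * |x| := by
        gcongr
        exact (abs_cot_le_inv_abs_sin _).trans (inv_anti₀ hpos (abs_div_pi_le_abs_sin_half hx))
    _ = π := by field_simp

-- `|sin ((x + y) / 2)| ≥ |x| / π - |y| / 2 ≥ (1/π - 1/4) |x|`, and `1/π - 1/4 > 1/15`.
lemma abs_div_fifteen_le_abs_sin_half_add {x y : ℝ} (hx : |x| ≤ π) (hy : 2 * |y| ≤ |x|) :
    |x| / 15 ≤ |sin ((x + y) / 2)| := by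
  have hsin := abs_div_pi_le_abs_sin_half hx
  have hshift : |sin (x / 2) - sin ((x + y) / 2)| ≤ |y| / 2 :=
    calc |sin (x / 2) - sin ((x + y) / 2)| ≤ |x / 2 - (x + y) / 2| := abs_sin_sub_sin_le _ _
      _ = |y| / 2 := by rw [show x / 2 - (x + y) / 2 = -y / 2 by ring, abs_div, abs_neg, abs_two]
  have hpi : 20 / 63 * |x| ≤ |x| / π := by
    rw [le_div_iff₀ pi_pos]; nlinarith [pi_lt_d2, abs_nonneg x]
  linarith [abs_sub_abs_le_abs_sub (sin (x / 2)) (sin ((x + y) / 2)), abs_nonneg x]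

lemma abs_cot_half_add_mul_abs_le {x y : ℝ} (hx : |x| ≤ π) (hy : 2 * |y| ≤ |x|) :
    |cot ((x + y) / 2)| * |x| ≤ 15 := by
  rcases eq_or_ne x 0 with rfl | hx0
  · simp
  have hpos : 0 < |x| / 15 := by positivity
  calc |cot ((x + y) / 2)| * |x| ≤ (|x| / 15)⁻¹ * |x| := by
        gcongr
        exact (abs_cot_le_inv_abs_sin _).trans
          (inv_anti₀ hpos (abs_div_fifteen_le_abs_sin_half_add hx hy))
    _ = 15 := by field_simp

lemma abs_cot_half_sub_cot_half_add_mul_sq_le {x y : ℝ} (hx : |x| ≤ π) (hy : 2 * |y| ≤ |x|) :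
    |cot (x / 2) - cot ((x + y) / 2)| * |x| ^ 2 ≤ 15 * π / 2 * |y| := by
  rcases eq_or_ne x 0 with rfl | hx0
  · simp only [abs_zero, ne_eq, OfNat.ofNat_ne_zero, not_false_eq_true, zero_pow, mul_zero]
    positivity
  have hs₁ := abs_div_pi_le_abs_sin_half hx
  have hs₂ := abs_div_fifteen_le_abs_sin_half_add hx hy
  have hpos₁ : 0 < |x| / π := by positivity
  have hpos₂ : 0 < |x| / 15 := by positivity
  have hsin_y : |sin ((x + y) / 2 - x / 2)| ≤ |y| / 2 := by
    rw [show (x + y) / 2 - x / 2 = y / 2 by ring]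
    exact abs_sin_le_abs.trans (by rw [abs_div, abs_two])
  rw [cot_sub_cot (abs_pos.mp (hpos₁.trans_le hs₁)) (abs_pos.mp (hpos₂.trans_le hs₂)),
    abs_div, abs_mul]
  calc |sin ((x + y) / 2 - x / 2)| / (|sin (x / 2)| * |sin ((x + y) / 2)|) * |x| ^ 2
      ≤ |y| / 2 / (|x| / π * (|x| / 15)) * |x| ^ 2 := by gcongr
    _ = 15 * π / 2 * |y| := by field_simp

end Real

theorem Function.Periodic.deriv {𝕜 F : Type*} [NontriviallyNormedField 𝕜] [NormedAddCommGroup F]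
    [NormedSpace 𝕜 F] {f : 𝕜 → F} {c : 𝕜} (hp : Function.Periodic f c) :
    Function.Periodic (deriv f) c := fun x => by
  rw [← deriv_comp_add_const, hp.funext]

section Norms

variable {u : ℝ → ℝ}

lemma C0norm_nonneg (u : ℝ → ℝ) : 0 ≤ C0norm u :=
  Real.iSup_nonneg fun _ => abs_nonneg _

lemma C1norm_nonneg (u : ℝ → ℝ) : 0 ≤ C1norm u :=
  Real.iSup_nonneg fun _ => by positivity

lemma abs_le_C0norm (hp : Function.Periodic u (2 * π)) (hu : Continuous u) (s : ℝ) :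
    |u s| ≤ C0norm u :=
  le_ciSup ((hp.comp abs).isBounded_of_continuous (by positivity) hu.abs).bddAbove s

lemma abs_deriv_le_C1norm (hp : Function.Periodic u (2 * π)) (hu : ContDiff ℝ 1 u) (s : ℝ) :
    |deriv u s| ≤ C1norm u := by
  have hbdd : BddAbove (Set.range fun s => |u s| + |deriv u s|) :=
    (((hp.comp abs).add (hp.deriv.comp abs)).isBounded_of_continuous (by positivity)
      (hu.continuous.abs.add (hu.continuous_deriv le_rfl).abs)).bddAbove
  exact (le_add_of_nonneg_left (abs_nonneg _)).trans (le_ciSup hbdd s)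

lemma abs_sub_le_C1norm_mul (hp : Function.Periodic u (2 * π)) (hu : ContDiff ℝ 1 u)
    (a b : ℝ) : |u a - u b| ≤ C1norm u * |a - b| := by
  simpa only [Real.norm_eq_abs] using
    convex_univ.norm_image_sub_le_of_norm_deriv_le (fun x _ => hu.differentiable one_ne_zero x)
      (fun x _ => abs_deriv_le_C1norm hp hu x) (Set.mem_univ b) (Set.mem_univ a)

lemma holderNorm_le {α A B : ℝ} (hA : 0 ≤ A) (hB : 0 ≤ B) (h0 : ∀ s, |u s| ≤ A)
    (h1 : ∀ s s', s ≠ s' → |s - s'| < 1 → |u s - u s'| ≤ B * |s - s'| ^ α) :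
    holderNorm α u ≤ A + B := by
  refine add_le_add (Real.iSup_le h0 hA) (Real.sSup_le ?_ hB)
  rintro _ ⟨s, s', hne, hlt, rfl⟩
  rw [div_le_iff₀ (rpow_pos_of_pos (abs_pos.mpr (sub_ne_zero.mpr hne)) α)]
  exact h1 s s' hne hlt

end Norms

lemma abs_intervalIntegral_right_le_mul_log {F : ℝ → ℝ} {c x r R : ℝ} (hr : 0 < r) (hrR : r ≤ R)
    (hF : ∀ t, r ≤ t - x → t - x ≤ R → |F t| ≤ c / (t - x)) :
    |∫ t in x + r..x + R, F t| ≤ c * log (R / r) := by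
  have hbound : IntervalIntegrable (fun t => c / (t - x)) volume (x + r) (x + R) := by
    refine (continuousOn_const.div (continuous_id.sub continuous_const).continuousOn
      fun t ht => ?_).intervalIntegrable
    rw [Set.uIcc_of_le (by linarith)] at ht
    exact (sub_pos.mpr (show x < t by linarith [ht.1])).ne'
  calc |∫ t in x + r..x + R, F t| = ‖∫ t in x + r..x + R, F t‖ := (norm_eq_abs _).symm
    _ ≤ ∫ t in x + r..x + R, c / (t - x) :=
        intervalIntegral.norm_integral_le_of_norm_le (by linarith)
          (Filter.Eventually.of_forall fun t ht => hF t (by linarith [ht.1]) (by linarith [ht.2]))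
          hbound
    _ = c * log (R / r) := by
        simp only [div_eq_mul_inv c, intervalIntegral.integral_const_mul,
          intervalIntegral.integral_comp_sub_right (fun t => t⁻¹), add_sub_cancel_left,
          integral_inv_of_pos hr (hr.trans_le hrR)]

lemma abs_intervalIntegral_left_le_mul_log {F : ℝ → ℝ} {c x r R : ℝ} (hr : 0 < r) (hrR : r ≤ R)
    (hF : ∀ t, r ≤ x - t → x - t ≤ R → |F t| ≤ c / (x - t)) :
    |∫ t in x - R..x - r, F t| ≤ c * log (R / r) := by
  have hreflect : ∫ t in x - R..x - r, F t = ∫ t in x + r..x + R, F (2 * x - t) := by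
    rw [intervalIntegral.integral_comp_sub_left F, show 2 * x - (x + R) = x - R by ring,
      show 2 * x - (x + r) = x - r by ring]
  rw [hreflect]
  refine abs_intervalIntegral_right_le_mul_log hr hrR fun t h₁ h₂ => ?_
  have hsub : x - (2 * x - t) = t - x := by ring
  rw [← hsub] at h₁ h₂ ⊢
  exact hF _ h₁ h₂

lemma mul_add_mul_log_le_rpow {α h : ℝ} (hα0 : 0 < α) (hα1 : α < 1) (hh0 : 0 < h) (hh1 : h < 1) :
    4 * h + 40 / π * h * log (π / (2 * h)) ≤ (4 + 20 / (1 - α)) * h ^ α := by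
  have h1α : 0 < 1 - α := by linarith
  have hlin : h ≤ h ^ α := by
    simpa using rpow_le_rpow_of_exponent_ge hh0 hh1.le hα1.le
  have hlog : log (π / (2 * h)) ≤ (π / 2) ^ (1 - α) / h ^ (1 - α) / (1 - α) := by
    rw [show π / (2 * h) = π / 2 / h by ring, ← div_rpow (by positivity) hh0.le]
    exact log_le_rpow_div (by positivity) h1α
  have hpow : h / h ^ (1 - α) = h ^ α := by
    rw [← rpow_one_sub' hh0.le (by rw [sub_sub_cancel]; exact hα0.ne'), sub_sub_cancel]
  have hpi : (π / 2) ^ (1 - α) ≤ π / 2 := by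
    simpa using
      rpow_le_rpow_of_exponent_le (by linarith [pi_gt_three] : 1 ≤ π / 2) (by linarith : 1 - α ≤ 1)
  calc 4 * h + 40 / π * h * log (π / (2 * h))
      ≤ 4 * h ^ α + 40 / π * h * ((π / 2) ^ (1 - α) / h ^ (1 - α) / (1 - α)) := by gcongr
    _ = 4 * h ^ α + 40 / π * (π / 2) ^ (1 - α) * (h / h ^ (1 - α)) / (1 - α) := by ring
    _ ≤ 4 * h ^ α + 40 / π * (π / 2) * h ^ α / (1 - α) := by rw [hpow]; gcongr
    _ = (4 + 20 / (1 - α)) * h ^ α := by field_simp; ring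

def commKernel (f g : ℝ → ℝ) (s s' : ℝ) : ℝ :=
  cot ((s - s') / 2) * ((f s' - f s) * g s')

section Commutator

variable {f g : ℝ → ℝ} {L G : ℝ}

lemma commKernel_periodic (hfp : Function.Periodic f (2 * π))
    (hgp : Function.Periodic g (2 * π)) (s : ℝ) :
    Function.Periodic (commKernel f g s) (2 * π) := fun x => by
  have hcot : cot ((s - (x + 2 * π)) / 2) = cot ((s - x) / 2) := by
    rw [← cot_add_pi, show (s - (x + 2 * π)) / 2 + π = (s - x) / 2 by ring]
  simp only [commKernel, hcot, hfp x, hgp x]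

lemma abs_commKernel_le_of_abs_sub_le_pi (hLip : ∀ a b, |f a - f b| ≤ L * |a - b|)
    (hG : ∀ x, |g x| ≤ G) (hL : 0 ≤ L) {s s' : ℝ} (hw : |s - s'| ≤ π) :
    |commKernel f g s s'| ≤ π * L * G := by
  have hf : |f s' - f s| ≤ L * |s - s'| := by rw [abs_sub_comm s]; exact hLip s' s
  have hG0 : 0 ≤ G := (abs_nonneg _).trans (hG 0)
  calc |commKernel f g s s'| = |cot ((s - s') / 2)| * (|f s' - f s| * |g s'|) := by
        rw [commKernel, abs_mul, abs_mul]
    _ ≤ |cot ((s - s') / 2)| * (L * |s - s'| * G) := by gcongr; exact hG s'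
    _ = |cot ((s - s') / 2)| * |s - s'| * (L * G) := by ring
    _ ≤ π * (L * G) := by gcongr; exact abs_cot_half_mul_abs_le hw
    _ = π * L * G := by ring

lemma abs_commKernel_le (hfp : Function.Periodic f (2 * π)) (hgp : Function.Periodic g (2 * π))
    (hLip : ∀ a b, |f a - f b| ≤ L * |a - b|) (hG : ∀ x, |g x| ≤ G) (hL : 0 ≤ L) (s s' : ℝ) :
    |commKernel f g s s'| ≤ π * L * G := by
  obtain ⟨y, ⟨hy₁, hy₂⟩, hy⟩ :=
    (commKernel_periodic hfp hgp s).exists_mem_Ico (by positivity) s' (s - π)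
  rw [hy]
  exact abs_commKernel_le_of_abs_sub_le_pi hLip hG hL (abs_le.mpr ⟨by linarith, by linarith⟩)

lemma intervalIntegrable_commKernel (hfp : Function.Periodic f (2 * π))
    (hgp : Function.Periodic g (2 * π)) (hf : Continuous f) (hg : Continuous g)
    (hLip : ∀ a b, |f a - f b| ≤ L * |a - b|) (hG : ∀ x, |g x| ≤ G) (hL : 0 ≤ L) (s a b : ℝ) :
    IntervalIntegrable (commKernel f g s) volume a b := by
  have hmeas : Measurable (commKernel f g s) :=
    (measurable_cot.comp (by fun_prop)).mul ((hf.sub continuous_const).mul hg).measurable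
  refine (intervalIntegrable_const (c := π * L * G)).mono_fun' hmeas.aestronglyMeasurable
    (Filter.Eventually.of_forall fun x => ?_)
  exact abs_commKernel_le hfp hgp hLip hG hL s x

lemma commH_eq_integral_commKernel (hfp : Function.Periodic f (2 * π))
    (hgp : Function.Periodic g (2 * π)) (s a : ℝ) :
    commH f g s = 1 / (2 * π) * ∫ s' in a..a + 2 * π, commKernel f g s s' := by
  rw [(commKernel_periodic hfp hgp s).intervalIntegral_add_eq a 0, zero_add]
  rfl

lemma abs_commH_le (hfp : Function.Periodic f (2 * π)) (hgp : Function.Periodic g (2 * π))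
    (hLip : ∀ a b, |f a - f b| ≤ L * |a - b|) (hG : ∀ x, |g x| ≤ G) (hL : 0 ≤ L) (s : ℝ) :
    |commH f g s| ≤ π * L * G := by
  have hint : ‖∫ s' in (0 : ℝ)..2 * π, commKernel f g s s'‖ ≤ π * L * G * |2 * π - 0| :=
    intervalIntegral.norm_integral_le_of_norm_le_const fun x _ =>
      abs_commKernel_le hfp hgp hLip hG hL s x
  rw [sub_zero, abs_of_pos two_pi_pos, Real.norm_eq_abs] at hint
  calc |commH f g s| = 1 / (2 * π) * |∫ s' in (0 : ℝ)..2 * π, commKernel f g s s'| := by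
        rw [commH, abs_mul, abs_of_pos (by positivity)]; rfl
    _ ≤ 1 / (2 * π) * (π * L * G * (2 * π)) := by gcongr
    _ = π * L * G := by field_simp

lemma abs_commKernel_sub_commKernel_le (hLip : ∀ a b, |f a - f b| ≤ L * |a - b|)
    (hG : ∀ x, |g x| ≤ G) (hL : 0 ≤ L) {s₁ s₂ s' : ℝ} (hh : 2 * |s₁ - s₂| ≤ |s₁ - s'|)
    (hD : |s₁ - s'| ≤ π) :
    |commKernel f g s₁ s' - commKernel f g s₂ s'| ≤ 40 * L * G * |s₁ - s₂| / |s₁ - s'| := by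
  rcases eq_or_ne s₁ s₂ with rfl | hne
  · simp
  set x := s₁ - s'
  set y := s₂ - s₁
  have hy : |s₁ - s₂| = |y| := abs_sub_comm _ _
  rw [hy] at hh ⊢
  have hx0 : 0 < |x| := lt_of_lt_of_le (by positivity [sub_ne_zero.mpr hne.symm]) hh
  have hG0 : 0 ≤ G := (abs_nonneg _).trans (hG 0)
  have hf₁ : |f s' - f s₁| ≤ L * |x| := (abs_sub_comm _ _).trans_le (hLip s₁ s')
  have hf₂ : |f s₂ - f s₁| ≤ L * |y| := hLip s₂ s₁
  set Δ := cot (x / 2) - cot ((x + y) / 2)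
  have hdecomp : commKernel f g s₁ s' - commKernel f g s₂ s' =
      Δ * ((f s' - f s₁) * g s') + cot ((x + y) / 2) * ((f s₂ - f s₁) * g s') := by
    simp only [commKernel, Δ, show (s₂ - s') / 2 = (x + y) / 2 by ring]
    ring
  have hfar : |Δ * ((f s' - f s₁) * g s')| * |x| ≤ 15 * π / 2 * |y| * (L * G) :=
    calc |Δ * ((f s' - f s₁) * g s')| * |x| = |Δ| * |x| * (|f s' - f s₁| * |g s'|) := by
          rw [abs_mul, abs_mul]; ring
      _ ≤ |Δ| * |x| * (L * |x| * G) := by gcongr; exact hG s'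
      _ = |Δ| * |x| ^ 2 * (L * G) := by ring
      _ ≤ 15 * π / 2 * |y| * (L * G) :=
          mul_le_mul_of_nonneg_right (abs_cot_half_sub_cot_half_add_mul_sq_le hD hh)
            (by positivity)
  have hnear : |cot ((x + y) / 2) * ((f s₂ - f s₁) * g s')| * |x| ≤ 15 * |y| * (L * G) :=
    calc |cot ((x + y) / 2) * ((f s₂ - f s₁) * g s')| * |x|
          = |cot ((x + y) / 2)| * |x| * (|f s₂ - f s₁| * |g s'|) := by rw [abs_mul, abs_mul]; ring
      _ ≤ |cot ((x + y) / 2)| * |x| * (L * |y| * G) := by gcongr; exact hG s'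
      _ ≤ 15 * (L * |y| * G) :=
          mul_le_mul_of_nonneg_right (abs_cot_half_add_mul_abs_le hD hh) (by positivity)
      _ = 15 * |y| * (L * G) := by ring
  rw [le_div_iff₀ hx0, hdecomp]
  calc |Δ * ((f s' - f s₁) * g s') + cot ((x + y) / 2) * ((f s₂ - f s₁) * g s')| * |x|
      ≤ (|Δ * ((f s' - f s₁) * g s')| + |cot ((x + y) / 2) * ((f s₂ - f s₁) * g s')|) * |x| := by
        gcongr; exact abs_add_le _ _
    _ ≤ (15 * π / 2 + 15) * |y| * (L * G) := by linarith
    _ ≤ 40 * L * G * |y| := by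
        have : 15 * π / 2 + 15 ≤ 40 := by linarith [pi_lt_d2]
        have : 0 ≤ |y| * (L * G) := by positivity
        nlinarith

lemma commH_sub_commH_eq_integral (hfp : Function.Periodic f (2 * π))
    (hgp : Function.Periodic g (2 * π)) (hf : Continuous f) (hg : Continuous g)
    (hLip : ∀ a b, |f a - f b| ≤ L * |a - b|) (hG : ∀ x, |g x| ≤ G) (hL : 0 ≤ L) (s₁ s₂ a : ℝ) :
    commH f g s₁ - commH f g s₂ =
      1 / (2 * π) * ∫ t in a..a + 2 * π, (commKernel f g s₁ t - commKernel f g s₂ t) := by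
  have hK := intervalIntegrable_commKernel hfp hgp hf hg hLip hG hL
  rw [commH_eq_integral_commKernel hfp hgp s₁ a, commH_eq_integral_commKernel hfp hgp s₂ a,
    ← mul_sub, ← intervalIntegral.integral_sub (hK s₁ _ _) (hK s₂ _ _)]

lemma abs_commH_sub_commH_le (hfp : Function.Periodic f (2 * π))
    (hgp : Function.Periodic g (2 * π)) (hf : Continuous f) (hg : Continuous g)
    (hLip : ∀ a b, |f a - f b| ≤ L * |a - b|) (hG : ∀ x, |g x| ≤ G) (hL : 0 ≤ L)
    {s₁ s₂ : ℝ} (hne : s₁ ≠ s₂) (hh : 2 * |s₁ - s₂| ≤ π) :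
    |commH f g s₁ - commH f g s₂| ≤
      L * G * (4 * |s₁ - s₂| + 40 / π * |s₁ - s₂| * log (π / (2 * |s₁ - s₂|))) := by
  set h := |s₁ - s₂|
  have hh0 : 0 < h := abs_pos.mpr (sub_ne_zero.mpr hne)
  set F := fun t => commKernel f g s₁ t - commKernel f g s₂ t
  have hK := intervalIntegrable_commKernel hfp hgp hf hg hLip hG hL
  have hF : ∀ a b, IntervalIntegrable F volume a b := fun a b => (hK s₁ a b).sub (hK s₂ a b)
  have hsplit : ∫ t in s₁ - π..s₁ - π + 2 * π, F t = (∫ t in s₁ - π..s₁ - 2 * h, F t) +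
      (∫ t in s₁ - 2 * h..s₁ + 2 * h, F t) + ∫ t in s₁ + 2 * h..s₁ + π, F t := by
    rw [show s₁ - π + 2 * π = s₁ + π by ring,
      intervalIntegral.integral_add_adjacent_intervals (hF _ _) (hF _ _),
      intervalIntegral.integral_add_adjacent_intervals (hF _ _) (hF _ _)]
  have hfar : ∀ t, 2 * h ≤ |s₁ - t| → |s₁ - t| ≤ π → |F t| ≤ 40 * L * G * h / |s₁ - t| :=
    fun t h₁ h₂ => abs_commKernel_sub_commKernel_le hLip hG hL h₁ h₂
  have hleft : |∫ t in s₁ - π..s₁ - 2 * h, F t| ≤ 40 * L * G * h * log (π / (2 * h)) :=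
    abs_intervalIntegral_left_le_mul_log (by positivity) hh fun t h₁ h₂ => by
      have ht : |s₁ - t| = s₁ - t := abs_of_nonneg (by linarith)
      rw [← ht] at h₁ h₂ ⊢
      exact hfar t h₁ h₂
  have hright : |∫ t in s₁ + 2 * h..s₁ + π, F t| ≤ 40 * L * G * h * log (π / (2 * h)) :=
    abs_intervalIntegral_right_le_mul_log (by positivity) hh fun t h₁ h₂ => by
      have ht : |s₁ - t| = t - s₁ := by rw [abs_sub_comm]; exact abs_of_nonneg (by linarith)
      rw [← ht] at h₁ h₂ ⊢
      exact hfar t h₁ h₂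
  have hmid : ‖∫ t in s₁ - 2 * h..s₁ + 2 * h, F t‖ ≤
      2 * (π * L * G) * |s₁ + 2 * h - (s₁ - 2 * h)| :=
    intervalIntegral.norm_integral_le_of_norm_le_const fun t _ => by
      have h₁ := abs_commKernel_le hfp hgp hLip hG hL s₁ t
      have h₂ := abs_commKernel_le hfp hgp hLip hG hL s₂ t
      exact (abs_sub _ _).trans (by linarith)
  rw [Real.norm_eq_abs, (show s₁ + 2 * h - (s₁ - 2 * h) = 4 * h by ring),
    abs_of_pos (by positivity : 0 < 4 * h)] at hmid
  rw [commH_sub_commH_eq_integral hfp hgp hf hg hLip hG hL s₁ s₂ (s₁ - π), hsplit, abs_mul,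
    abs_of_pos (by positivity : 0 < 1 / (2 * π))]
  calc 1 / (2 * π) * |(∫ t in s₁ - π..s₁ - 2 * h, F t) + (∫ t in s₁ - 2 * h..s₁ + 2 * h, F t) +
        ∫ t in s₁ + 2 * h..s₁ + π, F t|
      ≤ 1 / (2 * π) * (40 * L * G * h * log (π / (2 * h)) + 2 * (π * L * G) * (4 * h) +
          40 * L * G * h * log (π / (2 * h))) := by
        gcongr
        exact (abs_add_le _ _).trans
          (add_le_add ((abs_add_le _ _).trans (add_le_add hleft hmid)) hright)
    _ = L * G * (4 * h + 40 / π * h * log (π / (2 * h))) := by field_simp; ring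

lemma abs_commH_sub_commH_le_rpow {α : ℝ} (hα0 : 0 < α) (hα1 : α < 1)
    (hfp : Function.Periodic f (2 * π)) (hgp : Function.Periodic g (2 * π)) (hf : Continuous f)
    (hg : Continuous g) (hLip : ∀ a b, |f a - f b| ≤ L * |a - b|) (hG : ∀ x, |g x| ≤ G)
    (hL : 0 ≤ L) {s₁ s₂ : ℝ} (hne : s₁ ≠ s₂) (hlt : |s₁ - s₂| < 1) :
    |commH f g s₁ - commH f g s₂| ≤ (4 + 20 / (1 - α)) * (L * G) * |s₁ - s₂| ^ α := by
  have hG0 : 0 ≤ G := (abs_nonneg _).trans (hG 0)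
  calc |commH f g s₁ - commH f g s₂|
      ≤ L * G * (4 * |s₁ - s₂| + 40 / π * |s₁ - s₂| * log (π / (2 * |s₁ - s₂|))) :=
        abs_commH_sub_commH_le hfp hgp hf hg hLip hG hL hne (by linarith [pi_gt_three])
    _ ≤ L * G * ((4 + 20 / (1 - α)) * |s₁ - s₂| ^ α) := by
        gcongr
        exact mul_add_mul_log_le_rpow hα0 hα1 (abs_pos.mpr (sub_ne_zero.mpr hne)) hlt
    _ = (4 + 20 / (1 - α)) * (L * G) * |s₁ - s₂| ^ α := by ring

end Commutator

/-- the commutator estimate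
`‖[H,f]g‖_{C^{0,α}} ≤ C ‖f‖_{C¹} ‖g‖_{C⁰}` with `C = C(α)` only. -/
theorem stmt6 (α : ℝ) (hα : α ∈ Set.Ioo (0 : ℝ) 1) :
    ∃ C : ℝ, 0 < C ∧
      ∀ f g : ℝ → ℝ, Function.Periodic f (2 * π) → Function.Periodic g (2 * π) →
        ContDiff ℝ 1 f → Continuous g →
        holderNorm α (commH f g) ≤ C * C1norm f * C0norm g := by
  obtain ⟨hα0, hα1⟩ := hα
  have h1α : 0 < 1 - α := by linarith
  refine ⟨π + (4 + 20 / (1 - α)), by positivity, fun f g hfp hgp hf hg => ?_⟩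
  have hLip := abs_sub_le_C1norm_mul hfp hf
  have hG := abs_le_C0norm hgp hg
  have hL := C1norm_nonneg f
  have hG0 := C0norm_nonneg g
  calc holderNorm α (commH f g)
      ≤ π * C1norm f * C0norm g + (4 + 20 / (1 - α)) * (C1norm f * C0norm g) :=
        holderNorm_le (by positivity) (by positivity) (abs_commH_le hfp hgp hLip hG hL)
          fun _ _ hne hlt =>
            abs_commH_sub_commH_le_rpow hα0 hα1 hfp hgp hf.continuous hg hLip hG hL hne hlt
    _ = (π + (4 + 20 / (1 - α))) * C1norm f * C0norm g := by ring
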